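/- arXiv:2308.15092 — 2 statements merged into one kernel-verified Lean document; each statement's English description precedes it below -/
import Mathlib

section
/- Let f : ℝⁿ → {0,1} classify by a measurable set S = f⁻¹(1), and suppose the data distribution μ assigns μ(S) ≥ 1/2. If μ has the concentration property μ(Sᶜ-points farther than ε from S) ≤ α(ε), then the probability that a random point x with f(x)=0 admits an adversarial perturbation of size ≤ ε (flipping the label to 1) is at least 1 - α(ε)/μ(f⁻¹(0)), provided μ(f⁻¹(0)) > 0. -/
open MeasureTheory Metric
open scoped ENNReal

/-- Inevitability of adversarial examples under concentration of measure:
if μ(S) ≥ 1/2 and the mass of points of Sᶜ farther than ε from S is at most α,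
then conditioned on being classified 0 (i.e. lying in Sᶜ), a random point admits
an ε-adversarial perturbation with probability at least 1 - α/μ(Sᶜ). -/
theorem inevitability_of_adversarial_examples
    {X : Type*} [MetricSpace X] [MeasurableSpace X] [BorelSpace X]
    (μ : Measure X) [IsProbabilityMeasure μ]
    (S : Set X) (hS : MeasurableSet S) (hhalf : 1 / 2 ≤ μ S)
    (ε : ℝ) (hε : 0 < ε) (α : ℝ≥0∞)
    (hconc : μ {x | x ∉ S ∧ ε < infDist x S} ≤ α)
    (hpos : 0 < μ Sᶜ) :
    1 - α / μ Sᶜ ≤ μ {x | x ∉ S ∧ infDist x S ≤ ε} / μ Sᶜ := by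
  have hsub : Sᶜ ⊆ {x | x ∉ S ∧ infDist x S ≤ ε} ∪ {x | x ∉ S ∧ ε < infDist x S} := by
    intro x hx
    rcases le_or_gt (infDist x S) ε with h | h
    · exact Or.inl ⟨hx, h⟩
    · exact Or.inr ⟨hx, h⟩
  have hle : μ Sᶜ ≤ μ {x | x ∉ S ∧ infDist x S ≤ ε} + α :=
    calc μ Sᶜ ≤ μ ({x | x ∉ S ∧ infDist x S ≤ ε} ∪ {x | x ∉ S ∧ ε < infDist x S}) :=
          measure_mono hsub
      _ ≤ μ {x | x ∉ S ∧ infDist x S ≤ ε} + μ {x | x ∉ S ∧ ε < infDist x S} :=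
          measure_union_le _ _
      _ ≤ μ {x | x ∉ S ∧ infDist x S ≤ ε} + α := add_le_add_right hconc _
  have hne : μ Sᶜ ≠ 0 := hpos.ne'
  have hfin : μ Sᶜ ≠ ⊤ := (measure_lt_top μ _).ne
  rw [tsub_le_iff_right]
  calc (1 : ℝ≥0∞) = μ Sᶜ / μ Sᶜ := (ENNReal.div_self hne hfin).symm
    _ ≤ (μ {x | x ∉ S ∧ infDist x S ≤ ε} + α) / μ Sᶜ :=
        ENNReal.div_le_div_right hle _
    _ = μ {x | x ∉ S ∧ infDist x S ≤ ε} / μ Sᶜ + α / μ Sᶜ := by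
        rw [ENNReal.add_div]
end

section
/- For independent standard Gaussian vector X in ℝⁿ, E‖X‖² = n, and P(‖X‖² ≥ n + 2√(nt) + 2t) ≤ e^{-t} for all t > 0. -/
open MeasureTheory ProbabilityTheory
open scoped ENNReal

section LMaux
open Real Set
open scoped NNReal

private lemma LM_log_ineq {w : ℝ} (hw : 0 ≤ w) : (1 + w) * Real.log (1 + w) ≤ w + w ^ 2 / 2 := by
  set g : ℝ → ℝ := fun w => w + w ^ 2 / 2 - (1 + w) * Real.log (1 + w) with hg
  have hderiv : ∀ x ∈ Set.Ioi (0:ℝ), HasDerivAt g (x - Real.log (1 + x)) x := by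
    intro x hx
    have hx0 : (0:ℝ) < 1 + x := by simp at hx; linarith
    have h1 : HasDerivAt (fun y : ℝ => 1 + y) 1 x := by
      simpa using (hasDerivAt_id x).const_add 1
    have hlog : HasDerivAt (fun y : ℝ => Real.log (1 + y)) ((1+x)⁻¹) x := by
      have := (Real.hasDerivAt_log hx0.ne').comp x h1; rw [mul_one] at this; exact this
    have hmul : HasDerivAt (fun y : ℝ => (1 + y) * Real.log (1 + y))
        (1 * Real.log (1 + x) + (1 + x) * (1 + x)⁻¹) x := h1.mul hlog
    have hpoly : HasDerivAt (fun y : ℝ => y + y ^ 2 / 2) (1 + x) x := by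
      have h2 : HasDerivAt (fun y : ℝ => y + y ^ 2 / 2) (1 + (2 * x ^ 1)/2) x :=
        (hasDerivAt_id x).add ((hasDerivAt_pow 2 x).div_const 2)
      simpa using h2
    have := hpoly.sub hmul
    refine HasDerivAt.congr_deriv this ?_
    rw [mul_inv_cancel₀ hx0.ne']
    ring
  have hcont : ContinuousOn g (Set.Ici (0:ℝ)) := by
    apply ContinuousOn.sub
    · fun_prop
    · apply ContinuousOn.mul (by fun_prop)
      apply ContinuousOn.log (by fun_prop)
      intro x hx; simp at hx; intro h; linarith
  have hmono : MonotoneOn g (Set.Ici (0:ℝ)) := by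
    refine monotoneOn_of_deriv_nonneg (convex_Ici 0) hcont ?_ ?_
    · intro x hx
      rw [interior_Ici] at hx
      exact (hderiv x hx).differentiableAt.differentiableWithinAt
    · intro x hx
      rw [interior_Ici] at hx
      rw [(hderiv x hx).deriv]
      have : Real.log (1 + x) ≤ (1 + x) - 1 := Real.log_le_sub_one_of_pos (by simp at hx; linarith)
      linarith
  have h0 : g 0 = 0 := by simp [hg]
  have := hmono (Set.self_mem_Ici) (Set.mem_Ici.mpr hw) hw
  rw [h0] at this
  simp only [hg] at this
  linarith

private lemma gaussPdf_eq (x : ℝ) :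
    gaussianPDFReal 0 1 x = (Real.sqrt (2 * π))⁻¹ * Real.exp (-(2⁻¹) * x ^ 2) := by
  simp only [gaussianPDFReal, NNReal.coe_one, mul_one, sub_zero]
  rw [show -x ^ 2 / (2:ℝ) = -(2⁻¹) * x ^ 2 by ring]

private lemma gaussReal_eq : gaussianReal 0 1
    = volume.withDensity (fun x => ((Real.toNNReal (gaussianPDFReal 0 1 x) : ℝ≥0) : ℝ≥0∞)) := by
  rw [gaussianReal_of_var_ne_zero 0 one_ne_zero]
  rfl

private lemma integral_gaussReal (g : ℝ → ℝ) :
    ∫ x, g x ∂(gaussianReal 0 1) = ∫ x, gaussianPDFReal 0 1 x * g x := by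
  rw [gaussReal_eq, integral_withDensity_eq_integral_smul
    ((measurable_gaussianPDFReal 0 1).real_toNNReal)]
  congr 1; ext x
  simp [NNReal.smul_def, Real.coe_toNNReal _ (gaussianPDFReal_nonneg 0 1 x)]

private lemma integrable_gaussReal_iff {g : ℝ → ℝ} :
    Integrable g (gaussianReal 0 1) ↔ Integrable (fun x => gaussianPDFReal 0 1 x * g x) volume := by
  rw [gaussReal_eq]
  rw [integrable_withDensity_iff_integrable_smul ((measurable_gaussianPDFReal 0 1).real_toNNReal)]
  constructor <;> intro h <;> refine h.congr (Filter.Eventually.of_forall fun x => ?_) <;>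
    simp [NNReal.smul_def, Real.coe_toNNReal _ (gaussianPDFReal_nonneg 0 1 x)]

private lemma integral_sq_exp : ∫ x : ℝ, x ^ 2 * Real.exp (-(2⁻¹) * x ^ 2) = Real.sqrt (2 * π) := by
  have habs : (fun x : ℝ => x ^ 2 * Real.exp (-(2⁻¹) * x ^ 2))
      = fun x : ℝ => |x| ^ 2 * Real.exp (-(2⁻¹) * |x| ^ 2) := by
    ext x; rw [sq_abs]
  rw [habs, integral_comp_abs (f := fun y : ℝ => y ^ 2 * Real.exp (-(2⁻¹) * y ^ 2))]
  have h := integral_rpow_mul_exp_neg_mul_rpow (p := 2) (q := 2) (b := 2⁻¹)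
    (by norm_num) (by norm_num) (by norm_num)
  have hcongr : ∫ x in Ioi (0:ℝ), x ^ (2:ℝ) * Real.exp (-2⁻¹ * x ^ (2:ℝ))
      = ∫ x in Ioi (0:ℝ), x ^ 2 * Real.exp (-(2⁻¹) * x ^ 2) := by
    refine setIntegral_congr_fun measurableSet_Ioi (fun x hx => ?_)
    rw [← Real.rpow_natCast x 2]
    norm_num
  rw [← hcongr, h]
  have hG : Real.Gamma ((2 + 1) / 2) = Real.sqrt π / 2 := by
    rw [show ((2:ℝ)+1)/2 = 1/2 + 1 by norm_num, Real.Gamma_add_one (by norm_num),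
      Real.Gamma_one_half_eq]
    ring
  rw [hG]
  have hb : ((2:ℝ)⁻¹) ^ (-(2 + 1) / 2 : ℝ) = 2 * Real.sqrt 2 := by
    rw [Real.inv_rpow (by norm_num), show (-(2+1)/2 : ℝ) = -(1 + 1/2) by norm_num,
      Real.rpow_neg (by norm_num), inv_inv, Real.rpow_add (by norm_num), Real.rpow_one,
      ← Real.sqrt_eq_rpow]
  rw [hb]
  rw [show Real.sqrt (2*π) = Real.sqrt 2 * Real.sqrt π from Real.sqrt_mul (by norm_num) _]
  ring

private lemma integrable_sq_mul_exp {b : ℝ} (hb : 0 < b) :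
    Integrable (fun x : ℝ => x ^ 2 * Real.exp (-b * x ^ 2)) := by
  have h := integrable_rpow_mul_exp_neg_mul_sq hb (by norm_num : (-1:ℝ) < 2)
  have h2 : ∀ x : ℝ, x ^ (2:ℝ) = x ^ (2:ℕ) := fun x => by
    rw [show (2:ℝ) = ((2:ℕ):ℝ) by norm_num, Real.rpow_natCast]
  refine h.congr (Filter.Eventually.of_forall fun x => by simp only [h2])

private lemma integrable_sq_gauss : Integrable (fun x : ℝ => x ^ 2) (gaussianReal 0 1) := by
  rw [integrable_gaussReal_iff]
  have : (fun x => gaussianPDFReal 0 1 x * x ^ 2)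
      = fun x => (Real.sqrt (2*π))⁻¹ * (x ^ 2 * Real.exp (-(2⁻¹) * x ^ 2)) := by
    ext x; rw [gaussPdf_eq]; ring
  rw [this]
  exact (integrable_sq_mul_exp (by norm_num)).const_mul _

private lemma integral_sq_gauss : ∫ x, x ^ 2 ∂(gaussianReal 0 1) = 1 := by
  rw [integral_gaussReal]
  have : (fun x => gaussianPDFReal 0 1 x * x ^ 2)
      = fun x => (Real.sqrt (2*π))⁻¹ * (x ^ 2 * Real.exp (-(2⁻¹) * x ^ 2)) := by
    ext x; rw [gaussPdf_eq]; ring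
  rw [this, integral_const_mul, integral_sq_exp, inv_mul_cancel₀]
  positivity

private lemma integrable_exp_sq_gauss {l : ℝ} (hl : l < 2⁻¹) :
    Integrable (fun x : ℝ => Real.exp (l * x ^ 2)) (gaussianReal 0 1) := by
  rw [integrable_gaussReal_iff]
  have : (fun x => gaussianPDFReal 0 1 x * Real.exp (l * x ^ 2))
      = fun x => (Real.sqrt (2*π))⁻¹ * Real.exp (-(2⁻¹ - l) * x ^ 2) := by
    ext x; rw [gaussPdf_eq, mul_assoc, ← Real.exp_add]; ring_nf
  rw [this]
  exact (integrable_exp_neg_mul_sq (by linarith)).const_mul _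

private lemma integral_exp_sq_gauss {l : ℝ} (hl : l < 2⁻¹) :
    ∫ x, Real.exp (l * x ^ 2) ∂(gaussianReal 0 1) = (Real.sqrt (1 - 2 * l))⁻¹ := by
  rw [integral_gaussReal]
  have : (fun x => gaussianPDFReal 0 1 x * Real.exp (l * x ^ 2))
      = fun x => (Real.sqrt (2*π))⁻¹ * Real.exp (-(2⁻¹ - l) * x ^ 2) := by
    ext x; rw [gaussPdf_eq, mul_assoc, ← Real.exp_add]; ring_nf
  rw [this, integral_const_mul, integral_gaussian]
  have h1 : (0:ℝ) < 2⁻¹ - l := by linarith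
  have h2 : (0:ℝ) < 1 - 2 * l := by linarith
  rw [show π / (2⁻¹ - l) = (2 * π) / (1 - 2 * l) by field_simp]
  rw [Real.sqrt_div (by positivity : (0:ℝ) ≤ 2*π)]
  have h3 : Real.sqrt (2*π) ≠ 0 := by positivity
  have h4 : Real.sqrt (1 - 2*l) ≠ 0 := by positivity
  field_simp

private theorem integrable_pi_prod (m : Measure ℝ) [SigmaFinite m] :
    ∀ (n : ℕ) (f : Fin n → ℝ → ℝ), (∀ i, Integrable (f i) m) →
      Integrable (fun x : Fin n → ℝ => ∏ i, f i (x i)) (Measure.pi fun _ => m) := by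
  intro n
  induction n with
  | zero =>
    intro f _
    simp only [Finset.univ_eq_empty, Finset.prod_empty]
    rw [integrable_const_iff]
    right
    constructor; rw [Measure.pi_univ]
    simp
  | succ n ih =>
    intro f hf
    have A := (measurePreserving_piFinSuccAbove (fun _ : Fin (n+1) => m) 0).symm
    rw [← A.integrable_comp_emb (MeasurableEquiv.measurableEmbedding _)]
    have B : Integrable (fun (x : Fin n → ℝ) ↦ ∏ j, f (Fin.succ j) (x j))
        (Measure.pi fun _ => m) := ih _ (fun i ↦ hf _)
    have C := Integrable.mul_prod (hf 0) B
    refine C.congr (Filter.Eventually.of_forall fun x => ?_)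
    simp_rw [MeasurableEquiv.piFinSuccAbove_symm_apply, Fin.insertNthEquiv,
      Fin.prod_univ_succ, Fin.insertNth_zero]
    simp [Fin.zero_succAbove, Function.comp_def, Fin.cons_zero, Fin.cons_succ]

private theorem integral_pi_prod (m : Measure ℝ) [SigmaFinite m] :
    ∀ (n : ℕ) (f : Fin n → ℝ → ℝ),
      ∫ x : Fin n → ℝ, ∏ i, f i (x i) ∂(Measure.pi fun _ => m) = ∏ i, ∫ x, f i x ∂m := by
  intro n
  induction n with
  | zero =>
    intro f
    simp only [Finset.univ_eq_empty, Finset.prod_empty, integral_const]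
    rw [Measure.real, Measure.pi_univ]
    simp
  | succ n ih =>
    intro f
    calc
      _ = ∫ x : ℝ × (Fin n → ℝ), f 0 x.1 * ∏ i : Fin n, f (Fin.succ i) (x.2 i)
          ∂(m.prod (Measure.pi fun _ => m)) := by
        rw [← ((measurePreserving_piFinSuccAbove (fun _ : Fin (n+1) => m) 0).symm).integral_comp']
        congr 1
        ext x
        simp_rw [MeasurableEquiv.piFinSuccAbove_symm_apply, Fin.insertNthEquiv,
          Fin.prod_univ_succ, Fin.insertNth_zero]
        simp [Fin.zero_succAbove, Function.comp_def, Fin.cons_zero, Fin.cons_succ]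
      _ = (∫ x, f 0 x ∂m) * ∏ i : Fin n, ∫ x, f (Fin.succ i) x ∂m := by
        rw [← ih, ← integral_prod_mul]
      _ = ∏ i, ∫ x, f i x ∂m := by rw [Fin.prod_univ_succ]

end LMaux

/-- Laurent–Massart chi-squared concentration: for a standard Gaussian vector X
in ℝⁿ, E‖X‖² = n and P(‖X‖² ≥ n + 2√(nt) + 2t) ≤ exp(-t) for all t > 0. -/
theorem gaussian_norm_squared_concentration
    (n : ℕ)
    (μ : Measure (Fin n → ℝ))
    (hμ : μ = Measure.pi (fun _ => gaussianReal 0 1)) :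
    (∫ x, (∑ i, x i ^ 2) ∂μ) = n ∧
    ∀ t : ℝ, 0 < t →
      μ {x | (n : ℝ) + 2 * Real.sqrt (n * t) + 2 * t ≤ ∑ i, x i ^ 2} ≤
        ENNReal.ofReal (Real.exp (-t)) := by
  subst hμ
  set γ : Measure ℝ := gaussianReal 0 1 with hγ
  have hint : ∀ i : Fin n, Integrable (fun x : Fin n → ℝ => x i ^ 2) (Measure.pi fun _ => γ) := by
    intro i
    have h := integrable_pi_prod γ n (fun j y => if j = i then y ^ 2 else 1) (fun j => by
      by_cases h : j = i
      · simpa [h] using integrable_sq_gauss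
      · simp [h])
    refine h.congr (Filter.Eventually.of_forall fun x => ?_)
    simp
  have hval : ∀ i : Fin n, ∫ x : Fin n → ℝ, x i ^ 2 ∂(Measure.pi fun _ => γ) = 1 := by
    intro i
    have h1 : (∫ x : Fin n → ℝ, x i ^ 2 ∂(Measure.pi fun _ => γ))
        = ∏ j, ∫ y, (if j = i then y ^ 2 else 1) ∂γ := by
      rw [← integral_pi_prod γ n (fun j y => if j = i then y ^ 2 else 1)]
      congr 1
      ext x
      simp
    rw [h1]
    apply Finset.prod_eq_one
    intro j _
    by_cases h : j = i
    · simpa [h] using integral_sq_gauss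
    · simp [h]
  constructor
  · rw [integral_finset_sum Finset.univ (fun i _ => hint i)]
    simp [hval]
  intro t ht
  rcases Nat.eq_zero_or_pos n with hn | hn
  · subst hn
    have : {x : Fin 0 → ℝ | (0:ℕ) + 2 * Real.sqrt ((0:ℕ) * t) + 2 * t ≤ ∑ i : Fin 0, x i ^ 2}
        = (∅ : Set (Fin 0 → ℝ)) := by
      ext x
      simp only [Set.mem_setOf_eq, Set.mem_empty_iff_false, iff_false, not_le]
      simp
      linarith
    rw [show ((0:ℕ):ℝ) = 0 by norm_num] at this ⊢
    rw [this]
    simp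
  have hn0 : (0:ℝ) < n := by exact_mod_cast hn
  set s : ℝ := Real.sqrt (t / n) with hs
  have hs0 : 0 < s := Real.sqrt_pos.mpr (by positivity)
  have hs2 : s ^ 2 = t / n := Real.sq_sqrt (by positivity)
  have hts : t = n * s ^ 2 := by rw [hs2]; field_simp
  have hden : (0:ℝ) < 1 + 2 * s := by linarith
  set l : ℝ := s / (1 + 2 * s) with hl
  have hl0 : 0 < l := by positivity
  have hl2 : l < 2⁻¹ := by rw [hl, div_lt_iff₀ hden]; linarith
  have h1l : 1 - 2 * l = (1 + 2 * s)⁻¹ := by rw [hl]; field_simp; ring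
  have hnt : Real.sqrt ((n:ℝ) * t) = n * s := by
    rw [hts, show (n:ℝ) * (n * s ^ 2) = (n * s) ^ 2 by ring, Real.sqrt_sq (by positivity)]
  set a : ℝ := (n:ℝ) + 2 * Real.sqrt ((n:ℝ) * t) + 2 * t with ha
  -- Chernoff bound
  have hmgf_int : Integrable (fun x : Fin n → ℝ => Real.exp (l * ∑ i, x i ^ 2))
      (Measure.pi fun _ => γ) := by
    have heq : (fun x : Fin n → ℝ => Real.exp (l * ∑ i, x i ^ 2))
        = fun x => ∏ i, Real.exp (l * x i ^ 2) := by
      ext x; rw [Finset.mul_sum, Real.exp_sum]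
    rw [heq]
    exact integrable_pi_prod γ n _ (fun i => integrable_exp_sq_gauss hl2)
  have hmgf : mgf (fun x : Fin n → ℝ => ∑ i, x i ^ 2) (Measure.pi fun _ => γ) l
      = ((Real.sqrt (1 - 2 * l))⁻¹) ^ n := by
    rw [mgf]
    have heq : (fun x : Fin n → ℝ => Real.exp (l * ∑ i, x i ^ 2))
        = fun x => ∏ i, Real.exp (l * x i ^ 2) := by
      ext x; rw [Finset.mul_sum, Real.exp_sum]
    simp only [heq]
    rw [integral_pi_prod γ n (fun _ y => Real.exp (l * y ^ 2))]
    simp [hγ, integral_exp_sq_gauss hl2]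
  have hcher := measure_ge_le_exp_mul_mgf (X := fun x : Fin n → ℝ => ∑ i, x i ^ 2)
    (μ := Measure.pi fun _ => γ) a hl0.le hmgf_int
  rw [hmgf] at hcher
  -- the analytic bound
  have hbound : Real.exp (-l * a) * ((Real.sqrt (1 - 2 * l))⁻¹) ^ n ≤ Real.exp (-t) := by
    have hsqrt : (Real.sqrt (1 - 2 * l))⁻¹ = Real.sqrt (1 + 2 * s) := by
      rw [h1l, Real.sqrt_inv, inv_inv]
    rw [hsqrt]
    have hsq_exp : Real.sqrt (1 + 2 * s) = Real.exp (Real.log (1 + 2 * s) / 2) := by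
      rw [← Real.log_sqrt (by linarith)]
      rw [Real.exp_log (Real.sqrt_pos.mpr (by linarith))]
    rw [hsq_exp, ← Real.exp_nat_mul, ← Real.exp_add, Real.exp_le_exp]
    -- key log inequality
    have hkey := LM_log_ineq (w := 2 * s) (by linarith)
    have hlog : Real.log (1 + 2 * s) ≤ (2 * s + 2 * s ^ 2) / (1 + 2 * s) := by
      rw [le_div_iff₀ hden]
      nlinarith [hkey]
    have hstep : -l * a + (n:ℝ) * (Real.log (1 + 2 * s) / 2)
        ≤ -l * a + (n:ℝ) * ((2 * s + 2 * s ^ 2) / (1 + 2 * s) / 2) := by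
      gcongr
    refine hstep.trans (le_of_eq ?_)
    rw [ha, hnt, hts, hl]
    field_simp
    ring
  -- conclude
  calc (Measure.pi fun _ => γ) {x | a ≤ ∑ i, x i ^ 2}
      = ENNReal.ofReal (((Measure.pi fun _ => γ) {x | a ≤ ∑ i, x i ^ 2}).toReal) := by
        rw [ENNReal.ofReal_toReal (measure_ne_top _ _)]
    _ ≤ ENNReal.ofReal (Real.exp (-t)) := by
        apply ENNReal.ofReal_le_ofReal
        exact hcher.trans hbound
end
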